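/- For each natural number n there exists a nonzero real constant C, depending only on n, such that for every choice of real numbers x_0,…,x_n and y_0,…,y_n one has det M = C · ψ_n(x) · ψ_n(y), where ψ_n(x) = ∏_{i=1}^n ∏_{ℓ=0}^{i-1} (x_i − x_ℓ)^{n+1−i} and ψ_n(y) = ∏_{i=1}^n ∏_{ℓ=0}^{i-1} (y_i − y_ℓ)^{n+1−i}. -/

import Mathlib

/-!
Replace the monomial basis `X^a Y^b` by the tensor Newton basis `N_a(X) N_b(Y)`, where
`N_a = ∏_{l<a} (X - x_l)` is `Lagrange.nodal (range a) x`. The change of basis is unitriangular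
for the componentwise order on exponents, so it does not change the determinant. In the Newton
basis the sample matrix is triangular, since `N_a(x_i) N_b(y_j) = 0` unless `a ≤ i` and `b ≤ j`,
and its diagonal entry at `(i, j)` is `N_i(x_i) N_j(y_j)`. Each `N_i(x_i)` occurs on the diagonal
`n + 1 - i` times, so the determinant is `ψ_n(x) ψ_n(y)` and the constant is `1`.
-/

open Finset

/-- Index set of a triangular lattice of degree `n` in two dimensions:
pairs `(i, j)` with `i + j ≤ n`. -/
abbrev TriIdx (n : ℕ) := {p : Fin (n + 1) × Fin (n + 1) // p.1.val + p.2.val ≤ n}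

/-- The sample matrix of the triangular lattice `{(x_i, y_j) : i + j ≤ n}`
with respect to the bivariate monomials of total degree at most `n`;
only the values `x_0, …, x_n` and `y_0, …, y_n` are used. -/
def sampleMatrix2 (n : ℕ) (x y : ℕ → ℝ) : Matrix (TriIdx n) (TriIdx n) ℝ :=
  Matrix.of fun r c => x (r.val.1 : ℕ) ^ (c.val.1 : ℕ) * y (r.val.2 : ℕ) ^ (c.val.2 : ℕ)

/-- `ψ_n(x) = ∏_{i=1}^n ∏_{ℓ=0}^{i-1} (x_i − x_ℓ)^{n+1−i}`. -/
def psi (n : ℕ) (x : ℕ → ℝ) : ℝ :=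
  ∏ i ∈ Finset.Icc 1 n, ∏ l ∈ Finset.range i, (x i - x l) ^ (n + 1 - i)

namespace Matrix

variable {ι R : Type*} [Fintype ι] [DecidableEq ι] [PartialOrder ι] [CommRing R]

theorem det_of_eq_zero_of_not_le {A : Matrix ι ι R} (hA : ∀ i j, ¬i ≤ j → A i j = 0) :
    A.det = ∏ i, A i i := by
  let _ : LinearOrder ι := (inferInstance : LinearOrder (LinearExtension ι))
  refine det_of_isUpperTriangular fun i j hji => hA i j fun hij => ?_
  exact (toLinearExtension.monotone hij).not_gt hji

theorem det_of_eq_zero_of_not_ge {A : Matrix ι ι R} (hA : ∀ i j, ¬j ≤ i → A i j = 0) :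
    A.det = ∏ i, A i i := by
  rw [← det_transpose, det_of_eq_zero_of_not_le (A := Aᵀ) fun i j h => hA j i h]
  rfl

end Matrix

namespace TriIdx

variable {n : ℕ} {M : Type*} [CommMonoid M]

theorem not_le_iff {p q : TriIdx n} :
    ¬p ≤ q ↔ q.1.1.val < p.1.1.val ∨ q.1.2.val < p.1.2.val := by
  simp only [← Subtype.coe_le_coe, Prod.le_def, Fin.le_def, not_and_or, not_le]

@[to_additive]
theorem prod_eq_prod_range_ite (g : ℕ → ℕ → M) :
    ∏ p : TriIdx n, g p.1.1 p.1.2 =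
      ∏ i ∈ range (n + 1), ∏ j ∈ range (n + 1), if i + j ≤ n then g i j else 1 := by
  rw [← prod_subtype (univ.filter fun q : Fin (n + 1) × Fin (n + 1) => q.1.1 + q.2.1 ≤ n)
      (by simp) (fun q => g q.1 q.2), prod_filter, Fintype.prod_prod_type,
    ← Fin.prod_univ_eq_prod_range]
  refine prod_congr rfl fun i _ => ?_
  exact Fin.prod_univ_eq_prod_range (fun j => if i.1 + j ≤ n then g i j else 1) _

theorem prod_range_ite_add_le (a : M) (i : ℕ) :
    ∏ j ∈ range (n + 1), (if i + j ≤ n then a else 1) = a ^ (n + 1 - i) := by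
  have : (range (n + 1)).filter (fun j => i + j ≤ n) = range (n + 1 - i) := by
    ext j; simp only [mem_filter, mem_range]; omega
  rw [← prod_filter, prod_const, this, card_range]

theorem prod_fst (f : ℕ → M) :
    ∏ p : TriIdx n, f p.1.1 = ∏ i ∈ range (n + 1), f i ^ (n + 1 - i) := by
  rw [prod_eq_prod_range_ite (fun i _ => f i)]
  exact prod_congr rfl fun i _ => prod_range_ite_add_le _ _

theorem prod_snd (f : ℕ → M) :
    ∏ p : TriIdx n, f p.1.2 = ∏ j ∈ range (n + 1), f j ^ (n + 1 - j) := by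
  rw [prod_eq_prod_range_ite (fun _ j => f j), prod_comm]
  refine prod_congr rfl fun j _ => ?_
  simp_rw [add_comm _ j]
  exact prod_range_ite_add_le _ _

end TriIdx

open Polynomial Lagrange

section Newton

variable {R : Type*} [CommRing R]

theorem coeff_nodal_range_of_lt {x : ℕ → R} {a k : ℕ} (h : a < k) :
    (nodal (range a) x).coeff k = 0 := by
  nontriviality R
  exact coeff_eq_zero_of_natDegree_lt (by simpa using h)

theorem coeff_nodal_range_self (x : ℕ → R) (a : ℕ) : (nodal (range a) x).coeff a = 1 := by
  nontriviality R
  simpa using (nodal_monic (s := range a) (v := x)).coeff_natDegree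

variable (n : ℕ) (x y : ℕ → R)

noncomputable def newtonSampleMatrix : Matrix (TriIdx n) (TriIdx n) R :=
  Matrix.of fun r c =>
    (nodal (range c.1.1) x).eval (x r.1.1) * (nodal (range c.1.2) y).eval (y r.1.2)

noncomputable def newtonCoeffMatrix : Matrix (TriIdx n) (TriIdx n) R :=
  Matrix.of fun c a => (nodal (range a.1.1) x).coeff c.1.1 * (nodal (range a.1.2) y).coeff c.1.2

theorem det_newtonCoeffMatrix : (newtonCoeffMatrix n x y).det = 1 := by
  rw [Matrix.det_of_eq_zero_of_not_le fun c a hca => ?_]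
  · exact prod_eq_one fun a _ => by simp [newtonCoeffMatrix, coeff_nodal_range_self]
  · rcases TriIdx.not_le_iff.1 hca with h | h
    · simp [newtonCoeffMatrix, coeff_nodal_range_of_lt h]
    · simp [newtonCoeffMatrix, coeff_nodal_range_of_lt h]

theorem det_newtonSampleMatrix : (newtonSampleMatrix n x y).det =
    (∏ i ∈ range (n + 1), (∏ l ∈ range i, (x i - x l)) ^ (n + 1 - i)) *
      ∏ j ∈ range (n + 1), (∏ l ∈ range j, (y j - y l)) ^ (n + 1 - j) := by
  rw [Matrix.det_of_eq_zero_of_not_ge fun r c hcr => ?_]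
  · simp only [newtonSampleMatrix, Matrix.of_apply, eval_nodal, prod_mul_distrib]
    rw [TriIdx.prod_fst (fun i => ∏ l ∈ range i, (x i - x l)),
      TriIdx.prod_snd (fun j => ∏ l ∈ range j, (y j - y l))]
  · rcases TriIdx.not_le_iff.1 hcr with h | h
    · simp [newtonSampleMatrix, eval_nodal_at_node (mem_range.2 h)]
    · simp [newtonSampleMatrix, eval_nodal_at_node (mem_range.2 h)]

end Newton

theorem sampleMatrix2_mul_newtonCoeffMatrix (n : ℕ) (x y : ℕ → ℝ) :
    sampleMatrix2 n x y * newtonCoeffMatrix n x y = newtonSampleMatrix n x y := by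
  ext r c
  have eval_eq {z : ℕ → ℝ} {a : ℕ} (ha : a ≤ n) (t : ℝ) :
      (nodal (range a) z).eval t = ∑ k ∈ range (n + 1), (nodal (range a) z).coeff k * t ^ k :=
    eval_eq_sum_range' (by simpa using Nat.lt_succ_of_le ha) t
  have hc : c.1.1.val + c.1.2.val ≤ n := c.2
  simp only [Matrix.mul_apply, sampleMatrix2, newtonCoeffMatrix, newtonSampleMatrix,
    Matrix.of_apply]
  rw [eval_eq (z := x) (by omega), eval_eq (z := y) (by omega), sum_mul_sum,
    TriIdx.sum_eq_sum_range_ite fun i j => x r.1.1 ^ i * y r.1.2 ^ j *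
      ((nodal (range c.1.1) x).coeff i * (nodal (range c.1.2) y).coeff j)]
  refine sum_congr rfl fun i _ => sum_congr rfl fun j _ => ?_
  split_ifs with hij
  · ring
  · rcases Nat.lt_or_ge c.1.1 i with h | h
    · simp [coeff_nodal_range_of_lt h]
    · simp [coeff_nodal_range_of_lt (show c.1.2.val < j by omega)]

theorem psi_eq_prod_range (n : ℕ) (x : ℕ → ℝ) :
    psi n x = ∏ i ∈ range (n + 1), (∏ l ∈ range i, (x i - x l)) ^ (n + 1 - i) := by
  refine (prod_subset (fun i hi => ?_) fun i hi hi' => ?_).trans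
    (prod_congr rfl fun i _ => prod_pow _ _ _)
  · simp only [mem_Icc, mem_range] at hi ⊢
    omega
  · obtain rfl : i = 0 := by
      simp only [mem_range, mem_Icc] at hi hi'
      omega
    simp

theorem det_sampleMatrix2 (n : ℕ) (x y : ℕ → ℝ) :
    (sampleMatrix2 n x y).det = psi n x * psi n y := by
  have h := congr_arg Matrix.det (sampleMatrix2_mul_newtonCoeffMatrix n x y)
  rwa [Matrix.det_mul, det_newtonCoeffMatrix, mul_one, det_newtonSampleMatrix,
    ← psi_eq_prod_range, ← psi_eq_prod_range] at h

theorem sampleMatrix2_det_eq (n : ℕ) :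
    ∃ C : ℝ, C ≠ 0 ∧ ∀ x y : ℕ → ℝ,
      (sampleMatrix2 n x y).det = C * psi n x * psi n y :=
  ⟨1, one_ne_zero, fun x y => by rw [one_mul, det_sampleMatrix2]⟩
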